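/- Let k, n ∈ ℕ with 1 ≤ k < n and let T be the set of finite words over {v₁,…,v_k} in which each vᵢ (1 ≤ i ≤ k) occurs at least once; T is a semigroup under concatenation. For w ∈ Sₙ, let τ(w) ∈ T be the word obtained from w by deleting all occurrences of letters of A and all occurrences of vᵢ for k < i ≤ n. Let ⟨y_t⟩_{t=1}^∞ be a sequence in T and let C ⊆ S₀ be a C-set in the semigroup S₀. Then there exists a sequence ⟨wₘ⟩_{m=1}^∞ of n-variable words over A such that {wₘ(ā) : ā ∈ Aₘⁿ} ⊆ C for every m ∈ ℕ, and for every finite nonempty G = {m₁ < m₂ < … < m_l} ⊆ ℕ, the product τ(w_{m₁})·τ(w_{m₂})·…·τ(w_{m_l}) belongs to FP(⟨y_t⟩_{t=1}^∞). -/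

import Mathlib

open scoped BigOperators

attribute [local instance] Ultrafilter.mul Ultrafilter.semigroup

namespace InfHJ

variable {α : Type*}

/-- The union alphabet `A = ⋃ᵢ Aᵢ`. -/
def bigA (𝒜 : ℕ → Set α) : Set α := ⋃ i, 𝒜 i

/-- `S₀`: the set of nonempty finite words all of whose letters come from `A`
(viewed inside the free monoid on `α ⊕ Fin n`, letters `Sum.inl a`, variables `Sum.inr i`). -/
def S0 (𝒜 : ℕ → Set α) (n : ℕ) : Set (FreeMonoid (α ⊕ Fin n)) :=
  {w | FreeMonoid.toList w ≠ [] ∧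
    ∀ x ∈ FreeMonoid.toList w, ∃ a ∈ bigA 𝒜, x = Sum.inl a}

/-- `Sₙ`: the set of `n`-variable words over `A`: every letter is in `A` and
every variable `vᵢ` (`i : Fin n`) occurs at least once. -/
def SV (𝒜 : ℕ → Set α) (n : ℕ) : Set (FreeMonoid (α ⊕ Fin n)) :=
  {w | (∀ x ∈ FreeMonoid.toList w, ∀ a : α, x = Sum.inl a → a ∈ bigA 𝒜) ∧
    ∀ i : Fin n, Sum.inr i ∈ FreeMonoid.toList w}

/-- Substitution `w(x⃗)`: replace every occurrence of the variable `vᵢ` by the letter `xᵢ`. -/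
def subst {n : ℕ} (w : FreeMonoid (α ⊕ Fin n)) (x : Fin n → α) :
    FreeMonoid (α ⊕ Fin n) :=
  FreeMonoid.map (Sum.elim Sum.inl fun i => Sum.inl (x i)) w

/-- The tuples `ā ∈ Aₘⁿ`. -/
def tuples (𝒜 : ℕ → Set α) (m n : ℕ) : Set (Fin n → α) := {a | ∀ j, a j ∈ 𝒜 m}

/-- `D` is a J-set in the (sub)semigroup `S` of the monoid `M`: for every finite set `F` of
sequences in `S` there are `m ≥ 1`, `a₁,…,a_{m+1} ∈ S` and `t₁ < … < t_m` such that
`a₁ f(t₁) a₂ f(t₂) ⋯ a_m f(t_m) a_{m+1} ∈ D` for every `f ∈ F`. -/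
def IsJSetIn {M : Type*} [Monoid M] (S D : Set M) : Prop :=
  ∀ F : Finset (ℕ → M), (∀ f ∈ F, ∀ t, f t ∈ S) →
    ∃ m : ℕ, 1 ≤ m ∧ ∃ a : Fin (m + 1) → M, (∀ i, a i ∈ S) ∧
      ∃ t : Fin m → ℕ, StrictMono t ∧ ∀ f ∈ F,
        (List.ofFn fun i : Fin m => a i.castSucc * f (t i)).prod * a (Fin.last m) ∈ D

/-- `D` is piecewise syndetic in the (sub)semigroup `S` of the monoid `M`: there is a finite
`F ⊆ S` such that for every finite `E ⊆ S` there is `x ∈ S` with `E·x ⊆ ⋃_{t ∈ F} t⁻¹D`. -/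
def IsPWSIn {M : Type*} [Monoid M] (S D : Set M) : Prop :=
  ∃ F : Finset M, ↑F ⊆ S ∧
    ∀ E : Finset M, ↑E ⊆ S → ∃ x ∈ S, ∀ e ∈ E, ∃ t ∈ F, t * (e * x) ∈ D

/-- A (two-sided) ideal of the subsemigroup `B`. -/
def IsIdealIn {T : Type*} [Mul T] (B I : Set T) : Prop :=
  I.Nonempty ∧ I ⊆ B ∧ ∀ x ∈ I, ∀ t ∈ B, t * x ∈ I ∧ x * t ∈ I

/-- `K` is the smallest (two-sided) ideal of the subsemigroup `B`. -/
def IsSmallestIdealIn {T : Type*} [Mul T] (B K : Set T) : Prop :=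
  IsIdealIn B K ∧ ∀ I, IsIdealIn B I → K ⊆ I

/-- `D` is central in the (sub)semigroup `S` of the semigroup `M`: `D` belongs to some
idempotent ultrafilter lying in the smallest two-sided ideal of
`βS = {q : Ultrafilter M | S ∈ q}`. -/
def IsCentralIn {M : Type*} [Semigroup M] (S D : Set M) : Prop :=
  ∃ p : Ultrafilter M, S ∈ p ∧ p * p = p ∧
    (∃ K : Set (Ultrafilter M), IsSmallestIdealIn {q : Ultrafilter M | S ∈ q} K ∧ p ∈ K) ∧
    D ∈ p

/-- `D` is a C-set in the (sub)semigroup `S` of the monoid `M`: `D` belongs to some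
idempotent ultrafilter on `S` all of whose members are J-sets in `S`. -/
def IsCSetIn {M : Type*} [Monoid M] (S D : Set M) : Prop :=
  ∃ p : Ultrafilter M, S ∈ p ∧ p * p = p ∧
    (∀ B ∈ p, IsJSetIn S (B ∩ S)) ∧ D ∈ p

/-- `FS(⟨xₙ⟩)` in a commutative additive monoid: all finite sums over nonempty finite index sets. -/
def FSset {T : Type*} [AddCommMonoid T] (x : ℕ → T) : Set T :=
  {s | ∃ H : Finset ℕ, H.Nonempty ∧ s = ∑ n ∈ H, x n}

/-- `FP(⟨y_t⟩)` in a (not necessarily commutative) monoid: all products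
`y_{t₁} ⋯ y_{t_l}` with `t₁ < … < t_l`, taken in increasing order of indices. -/
def FPset {T : Type*} [Monoid T] (y : ℕ → T) : Set T :=
  {u | ∃ G : Finset ℕ, G.Nonempty ∧ u = ((G.sort (· ≤ ·)).map y).prod}

/-- `C` is an IP set in the commutative monoid `T`. -/
def IsIPSet {T : Type*} [AddCommMonoid T] (C : Set T) : Prop :=
  ∃ x : ℕ → T, FSset x ⊆ C

/-- `τ(w) = |w|_{v}`: the number of occurrences of variables in `w`
(for one-variable words this is the number of occurrences of `v₁`). -/
def tauCount {n : ℕ} (w : FreeMonoid (α ⊕ Fin n)) : ℕ :=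
  (FreeMonoid.toList w).countP Sum.isRight

/-- `T`: the words over `{v₁,…,v_k}` in which every `vᵢ` occurs. -/
def Tfull (k : ℕ) : Set (FreeMonoid (Fin k)) :=
  {u | FreeMonoid.toList u ≠ [] ∧ ∀ i : Fin k, i ∈ FreeMonoid.toList u}

/-- `τ(w)`: delete from `w` all letters of `A` and all variables `vᵢ` with `i ≥ k`,
leaving a word over `{v₁,…,v_k}`. -/
def tauDel {n : ℕ} (k : ℕ) (w : FreeMonoid (α ⊕ Fin n)) : FreeMonoid (Fin k) :=
  FreeMonoid.ofList <| (FreeMonoid.toList w).filterMap fun x =>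
    match x with
    | Sum.inl _ => none
    | Sum.inr i => if h : (i : ℕ) < k then some ⟨i, h⟩ else none

section Helpers

variable {β : Type*}

lemma mem_toList_listProd {l : List (FreeMonoid β)} {x : β} :
    x ∈ FreeMonoid.toList l.prod ↔ ∃ u ∈ l, x ∈ FreeMonoid.toList u := by
  rw [FreeMonoid.toList_prod, List.mem_flatten]
  constructor
  · rintro ⟨L, hL, hx⟩
    obtain ⟨u, hu, rfl⟩ := List.mem_map.mp hL
    exact ⟨u, hu, hx⟩
  · rintro ⟨u, hu, hx⟩
    exact ⟨_, List.mem_map_of_mem hu, hx⟩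

lemma foldr_max_ge {l : List ℕ} {x : ℕ} (hx : x ∈ l) : x ≤ l.foldr max 0 := by
  induction l with
  | nil => cases hx
  | cons a l ih =>
    rcases List.mem_cons.mp hx with rfl | h
    · exact le_max_left _ _
    · exact le_trans (ih h) (le_max_right _ _)

variable {n k : ℕ}

lemma tauDel_mul (u v : FreeMonoid (α ⊕ Fin n)) :
    tauDel k (u * v) = tauDel (α := α) k u * tauDel k v := by
  show FreeMonoid.ofList _ = FreeMonoid.ofList _ * FreeMonoid.ofList _
  rw [show FreeMonoid.toList (u * v) = FreeMonoid.toList u ++ FreeMonoid.toList v from rfl,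
    List.filterMap_append]
  rfl

lemma tauDel_listProd (l : List (FreeMonoid (α ⊕ Fin n))) :
    tauDel k l.prod = (l.map (tauDel (α := α) k)).prod := by
  induction l with
  | nil => rfl
  | cons u l ih => rw [List.prod_cons, tauDel_mul, ih, List.map_cons, List.prod_cons]

lemma tauDel_eq_one (w : FreeMonoid (α ⊕ Fin n))
    (h : ∀ x ∈ FreeMonoid.toList w, ∃ b, x = Sum.inl b) :
    tauDel (α := α) k w = 1 := by
  show FreeMonoid.ofList _ = FreeMonoid.ofList []
  congr 1
  rw [List.filterMap_eq_nil_iff]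
  intro x hx
  obtain ⟨b, rfl⟩ := h x hx
  rfl

lemma subst_mul (u v : FreeMonoid (α ⊕ Fin n)) (x : Fin n → α) :
    subst (u * v) x = subst u x * subst v x :=
  map_mul (FreeMonoid.map _) u v

lemma subst_listProd (l : List (FreeMonoid (α ⊕ Fin n))) (x : Fin n → α) :
    subst l.prod x = (l.map (subst · x)).prod :=
  map_list_prod (FreeMonoid.map _) l

lemma subst_eq_self (w : FreeMonoid (α ⊕ Fin n)) (x : Fin n → α)
    (h : ∀ z ∈ FreeMonoid.toList w, ∃ b, z = Sum.inl b) : subst w x = w := by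
  apply FreeMonoid.toList.injective
  rw [show FreeMonoid.toList (subst w x)
      = (FreeMonoid.toList w).map (Sum.elim Sum.inl fun i => Sum.inl (x i)) from
    FreeMonoid.toList_map _ w]
  conv_rhs => rw [← List.map_id (FreeMonoid.toList w)]
  apply List.map_congr_left
  intro z hz
  obtain ⟨b, rfl⟩ := h z hz
  rfl

lemma toList_subst (w : FreeMonoid (α ⊕ Fin n)) (x : Fin n → α) :
    FreeMonoid.toList (subst w x)
      = (FreeMonoid.toList w).map (Sum.elim Sum.inl fun i => Sum.inl (x i)) :=
  FreeMonoid.toList_map _ w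

end Helpers

theorem statement7 (𝒜 : ℕ → Set α) (hmono : Monotone 𝒜)
    (hfin : ∀ i, (𝒜 i).Finite) (hne : ∀ i, (𝒜 i).Nonempty)
    (k n : ℕ) (hk : 1 ≤ k) (hkn : k < n)
    (y : ℕ → FreeMonoid (Fin k)) (hy : ∀ t, y t ∈ Tfull k)
    (C : Set (FreeMonoid (α ⊕ Fin n))) (hC : C ⊆ S0 𝒜 n)
    (hCset : IsCSetIn (S0 𝒜 n) C) :
    ∃ w : ℕ → FreeMonoid (α ⊕ Fin n), (∀ i, w i ∈ SV 𝒜 n) ∧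
      (∀ m : ℕ, ∀ a ∈ tuples 𝒜 m n, subst (w m) a ∈ C) ∧
      ∀ l : ℕ, 1 ≤ l → ∀ ms : Fin l → ℕ, StrictMono ms →
        (List.ofFn fun i : Fin l => tauDel k (w (ms i))).prod ∈ FPset y := by
  classical
  obtain ⟨p, hpS0, -, hpJ, hCp⟩ := hCset
  have hJ : IsJSetIn (S0 𝒜 n) (C ∩ S0 𝒜 n) := hpJ C hCp
  -- the lift `g t` of `y t` to an `n`-variable word
  set emb : Fin k → α ⊕ Fin n := fun i => Sum.inr (Fin.castLE hkn.le i) with hemb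
  set tail : FreeMonoid (α ⊕ Fin n) :=
    FreeMonoid.ofList (((List.finRange n).filter fun j : Fin n => decide (k ≤ (j : ℕ))).map Sum.inr)
    with htail
  set g : ℕ → FreeMonoid (α ⊕ Fin n) := fun t => FreeMonoid.map emb (y t) * tail with hg
  have htailList : FreeMonoid.toList tail
      = ((List.finRange n).filter fun j : Fin n => decide (k ≤ (j : ℕ))).map Sum.inr :=
    FreeMonoid.toList_ofList _
  have hgList : ∀ t, FreeMonoid.toList (g t)
      = (FreeMonoid.toList (y t)).map emb ++ FreeMonoid.toList tail := by
    intro t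
    rw [hg]
    show FreeMonoid.toList (FreeMonoid.map emb (y t)) ++ _ = _
    rw [FreeMonoid.toList_map]
  have hgletters : ∀ t, ∀ x ∈ FreeMonoid.toList (g t), ∃ i : Fin n, x = Sum.inr i := by
    intro t x hx
    rw [hgList, List.mem_append] at hx
    rcases hx with hx | hx
    · obtain ⟨i, -, rfl⟩ := List.mem_map.mp hx
      exact ⟨_, rfl⟩
    · rw [htailList] at hx
      obtain ⟨i, -, rfl⟩ := List.mem_map.mp hx
      exact ⟨_, rfl⟩
  have hgvar : ∀ t, ∀ i : Fin n, Sum.inr i ∈ FreeMonoid.toList (g t) := by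
    intro t i
    rw [hgList, List.mem_append]
    by_cases hik : (i : ℕ) < k
    · left
      refine List.mem_map.mpr ⟨⟨i, hik⟩, (hy t).2 _, ?_⟩
      simp [hemb, Fin.ext_iff]
    · right
      rw [htailList]
      refine List.mem_map.mpr ⟨i, ?_, rfl⟩
      rw [List.mem_filter]
      exact ⟨List.mem_finRange i, by simpa using Nat.le_of_not_lt hik⟩
  have hgtau : ∀ t, tauDel (α := α) k (g t) = y t := by
    intro t
    rw [hg]
    show FreeMonoid.ofList _ = y t
    rw [show FreeMonoid.toList (FreeMonoid.map emb (y t) * tail)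
        = FreeMonoid.toList (FreeMonoid.map emb (y t)) ++ FreeMonoid.toList tail from rfl,
      List.filterMap_append, FreeMonoid.toList_map, List.filterMap_map]
    have h1 : List.filterMap
        ((fun x : α ⊕ Fin n => match x with
          | Sum.inl _ => none
          | Sum.inr i => if h : (i : ℕ) < k then some ⟨i, h⟩ else none) ∘ emb)
        (FreeMonoid.toList (y t)) = FreeMonoid.toList (y t) := by
      have hfn : ((fun x : α ⊕ Fin n => match x with
          | Sum.inl _ => none
          | Sum.inr i => if h : (i : ℕ) < k then some ⟨i, h⟩ else none) ∘ emb) = some := by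
        funext i
        simp only [Function.comp_apply, hemb]
        rw [dif_pos (by simpa using i.isLt)]
        simp [Fin.ext_iff]
      rw [hfn, List.filterMap_some]
    have h2 : List.filterMap
        (fun x : α ⊕ Fin n => match x with
          | Sum.inl _ => none
          | Sum.inr i => if h : (i : ℕ) < k then some (⟨i, h⟩ : Fin k) else none)
        (FreeMonoid.toList tail) = [] := by
      rw [List.filterMap_eq_nil_iff]
      intro x hx
      rw [htailList] at hx
      obtain ⟨j, hj, rfl⟩ := List.mem_map.mp hx
      have hjk : k ≤ (j : ℕ) := by simpa using (List.mem_filter.mp hj).2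
      show (if h : (j : ℕ) < k then some (⟨j, h⟩ : Fin k) else none) = none
      rw [dif_neg (Nat.not_lt.mpr hjk)]
    rw [h1, h2, List.append_nil, FreeMonoid.ofList_toList]
  -- words in `S0` have only `inl` letters
  have hS0inl : ∀ u ∈ S0 𝒜 n, ∀ z ∈ FreeMonoid.toList u, ∃ b, z = Sum.inl b := by
    intro u hu z hz
    obtain ⟨b, -, rfl⟩ := hu.2 z hz
    exact ⟨b, rfl⟩
  -- substitutions of `g t` lie in `S0`
  have hsubstg : ∀ (a : Fin n → α), (∀ i, a i ∈ bigA 𝒜) → ∀ t, subst (g t) a ∈ S0 𝒜 n := by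
    intro a ha t
    constructor
    · rw [toList_subst, hgList]
      simp only [ne_eq, List.map_eq_nil_iff, List.append_eq_nil_iff]
      rintro ⟨h1, -⟩
      exact (hy t).1 h1
    · intro x hx
      rw [toList_subst] at hx
      obtain ⟨z, hz, rfl⟩ := List.mem_map.mp hx
      obtain ⟨i, rfl⟩ := hgletters t z hz
      exact ⟨a i, ha i, rfl⟩
  -- the key one-step construction
  have key : ∀ m N : ℕ, ∃ (w : FreeMonoid (α ⊕ Fin n)) (L : List ℕ),
      w ∈ SV 𝒜 n ∧ (∀ a ∈ tuples 𝒜 m n, subst w a ∈ C) ∧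
      L ≠ [] ∧ L.Chain' (· < ·) ∧ (∀ x ∈ L, N ≤ x) ∧
      tauDel k w = (L.map y).prod := by
    intro m N
    have htupfin : (tuples 𝒜 m n).Finite := by
      have : tuples 𝒜 m n ⊆ Set.univ.pi fun _ : Fin n => 𝒜 m := by
        intro a ha j _
        exact ha j
      exact (Set.Finite.pi fun _ => hfin m).subset this
    have hbig : ∀ a ∈ tuples 𝒜 m n, ∀ i, a i ∈ bigA 𝒜 := by
      intro a ha i
      exact Set.mem_iUnion.mpr ⟨m, ha i⟩
    set F : Finset (ℕ → FreeMonoid (α ⊕ Fin n)) :=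
      htupfin.toFinset.image (fun a t => subst (g (t + N)) a) with hF
    have hFS : ∀ f ∈ F, ∀ t, f t ∈ S0 𝒜 n := by
      intro f hf t
      obtain ⟨a, ha, rfl⟩ := Finset.mem_image.mp hf
      exact hsubstg a (hbig a (htupfin.mem_toFinset.mp ha)) _
    obtain ⟨m', hm', a, haS, t, ht, hprod⟩ := hJ F hFS
    refine ⟨(List.ofFn fun i : Fin m' => a i.castSucc * g (t i + N)).prod * a (Fin.last m'),
      List.ofFn fun i : Fin m' => t i + N, ?_, ?_, ?_, ?_, ?_, ?_⟩
    · constructor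
      · intro x hx b hxb
        rw [show FreeMonoid.toList (_ * a (Fin.last m'))
            = _ ++ FreeMonoid.toList (a (Fin.last m')) from rfl, List.mem_append] at hx
        rcases hx with hx | hx
        · obtain ⟨u, hu, hxu⟩ := mem_toList_listProd.mp hx
          obtain ⟨i, rfl⟩ := List.mem_ofFn.mp hu
          rw [show FreeMonoid.toList (a i.castSucc * g (t i + N))
              = FreeMonoid.toList (a i.castSucc) ++ FreeMonoid.toList (g (t i + N)) from rfl,
            List.mem_append] at hxu
          rcases hxu with hxu | hxu
          · obtain ⟨c, hc, hxc⟩ := (haS i.castSucc).2 x hxu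
            rw [hxb] at hxc
            rwa [Sum.inl.inj hxc]
          · obtain ⟨j, rfl⟩ := hgletters _ x hxu
            simp at hxb
        · obtain ⟨c, hc, hxc⟩ := (haS (Fin.last m')).2 x hx
          rw [hxb] at hxc
          rwa [Sum.inl.inj hxc]
      · intro i
        rw [show FreeMonoid.toList (_ * a (Fin.last m'))
            = _ ++ FreeMonoid.toList (a (Fin.last m')) from rfl, List.mem_append]
        left
        refine mem_toList_listProd.mpr ⟨a (⟨0, hm'⟩ : Fin m').castSucc * g (t ⟨0, hm'⟩ + N),
          List.mem_ofFn.mpr ⟨⟨0, hm'⟩, rfl⟩, ?_⟩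
        rw [show FreeMonoid.toList (a (⟨0, hm'⟩ : Fin m').castSucc * g (t ⟨0, hm'⟩ + N))
            = _ ++ FreeMonoid.toList (g (t ⟨0, hm'⟩ + N)) from rfl, List.mem_append]
        exact Or.inr (hgvar _ i)
    · intro x hx
      have hfmem : (fun s => subst (g (s + N)) x) ∈ F :=
        Finset.mem_image.mpr ⟨x, htupfin.mem_toFinset.mpr hx, rfl⟩
      have := (hprod _ hfmem).1
      rw [subst_mul, subst_listProd, List.map_ofFn]
      have heq : ((fun u => subst u x) ∘ fun i : Fin m' => a i.castSucc * g (t i + N))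
          = fun i : Fin m' => a i.castSucc * (fun s => subst (g (s + N)) x) (t i) := by
        funext i
        show subst (a i.castSucc * g (t i + N)) x = _
        rw [subst_mul, subst_eq_self _ _ (hS0inl _ (haS i.castSucc))]
      rw [heq, subst_eq_self _ _ (hS0inl _ (haS (Fin.last m')))]
      exact this
    · intro h
      have := congrArg List.length h
      simp only [List.length_ofFn, List.length_nil] at this
      omega
    · rw [List.Chain', List.isChain_iff_pairwise]
      exact List.pairwise_ofFn.mpr fun i j hij => by
        have := ht hij
        omega
    · intro x hx
      obtain ⟨i, rfl⟩ := List.mem_ofFn.mp hx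
      exact Nat.le_add_left N (t i)
    · have hfun : (tauDel (α := α) k ∘ fun i : Fin m' => a i.castSucc * g (t i + N))
          = y ∘ fun i : Fin m' => t i + N := by
        funext i
        show tauDel k (a i.castSucc * g (t i + N)) = y (t i + N)
        rw [tauDel_mul, tauDel_eq_one _ (hS0inl _ (haS i.castSucc)), one_mul, hgtau]
      rw [tauDel_mul, tauDel_listProd, List.map_ofFn, List.map_ofFn,
        tauDel_eq_one _ (hS0inl _ (haS (Fin.last m'))), mul_one, hfun]
  choose W L hWSV hWC hLne hLch hLge hWtau using key
  -- the recursion on lower bounds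
  let Nf : ℕ → ℕ := fun m => Nat.rec 0 (fun m' prev => (L m' prev).foldr max 0 + 1) m
  have hNfs : ∀ m, Nf (m + 1) = (L m (Nf m)).foldr max 0 + 1 := fun m => rfl
  set w : ℕ → FreeMonoid (α ⊕ Fin n) := fun m => W m (Nf m) with hw
  set Ls : ℕ → List ℕ := fun m => L m (Nf m) with hLs
  have hlt : ∀ m, ∀ x ∈ Ls m, x < Nf (m + 1) := by
    intro m x hx
    rw [hNfs]
    exact Nat.lt_succ_of_le (foldr_max_ge hx)
  have hNmono : StrictMono Nf := by
    apply strictMono_nat_of_lt_succ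
    intro m
    obtain ⟨x, hx⟩ := List.exists_mem_of_ne_nil _ (hLne m (Nf m))
    exact lt_of_le_of_lt (hLge m (Nf m) x hx) (hlt m x hx)
  have hcross : ∀ m m', m < m' → ∀ x ∈ Ls m, ∀ z ∈ Ls m', x < z := by
    intro m m' hmm x hx z hz
    calc x < Nf (m + 1) := hlt m x hx
      _ ≤ Nf m' := hNmono.monotone hmm
      _ ≤ z := hLge m' (Nf m') z hz
  refine ⟨w, fun m => hWSV m (Nf m), fun m a ha => hWC m (Nf m) a ha, ?_⟩
  intro l hl ms hms
  set LL : List ℕ := (List.ofFn fun i : Fin l => Ls (ms i)).flatten with hLL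
  have hprodeq : (List.ofFn fun i : Fin l => tauDel k (w (ms i))).prod = (LL.map y).prod := by
    have hfun : (fun i : Fin l => tauDel (α := α) k (w (ms i)))
        = List.prod ∘ List.map y ∘ fun i : Fin l => Ls (ms i) := by
      funext i
      exact hWtau (ms i) (Nf (ms i))
    rw [hLL, List.map_flatten, List.prod_flatten, List.map_ofFn, List.map_ofFn, hfun]
  have hLLpw : LL.Pairwise (· < ·) := by
    rw [hLL, List.pairwise_flatten]
    constructor
    · intro l' hl'
      obtain ⟨i, rfl⟩ := List.mem_ofFn.mp hl'
      exact List.isChain_iff_pairwise.mp (hLch (ms i) (Nf (ms i)))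
    · exact List.pairwise_ofFn.mpr fun i j hij => hcross _ _ (hms hij)
  have hLLne : LL ≠ [] := by
    obtain ⟨x, hx⟩ := List.exists_mem_of_ne_nil _ (hLne (ms ⟨0, hl⟩) (Nf (ms ⟨0, hl⟩)))
    exact List.ne_nil_of_mem <| List.mem_flatten.mpr
      ⟨Ls (ms ⟨0, hl⟩), List.mem_ofFn.mpr ⟨⟨0, hl⟩, rfl⟩, hx⟩
  obtain ⟨x, hx⟩ := List.exists_mem_of_ne_nil _ hLLne
  have hsort : LL.toFinset.sort (· ≤ ·) = LL :=
    (List.toFinset_sort (· ≤ ·) (hLLpw.imp ne_of_lt)).mpr (hLLpw.imp le_of_lt)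
  exact ⟨LL.toFinset, ⟨x, List.mem_toFinset.mpr hx⟩, by rw [hsort, hprodeq]⟩

end InfHJ
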